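/- Let K be a set of cumulative 𝓛-sequents (pairs of 𝓛-formulas) and α, β ∈ 𝓛. The following are equivalent: (1) for every conceptual cumulative model 𝓜, if φ |~_𝓜 ψ for all (φ,ψ) ∈ K then α |~_𝓜 β; (2) the pair (α,β) belongs to the smallest conceptual cumulative consequence relation containing K (i.e., α |~ β has a proof from K in the system CC). -/
import Mathlib


namespace DR

/-- Formulas of the lattice-based language 𝓛: variables, ⊥, ⊤, ∧, ∨. -/
inductive Fm : Type where
  | var : ℕ → Fm
  | bot : Fm
  | top : Fm
  | and : Fm → Fm → Fm
  | or  : Fm → Fm → Fm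

/-- A polarity (formal context) (A, X, I). -/
structure Polarity : Type 1 where
  Obj : Type
  Feat : Type
  I : Obj → Feat → Prop

namespace Polarity

variable (P : Polarity)

def up (B : Set P.Obj) : Set P.Feat := {x | ∀ b ∈ B, P.I b x}
def dn (Y : Set P.Feat) : Set P.Obj := {a | ∀ y ∈ Y, P.I a y}

lemma subset_dn_up (B : Set P.Obj) : B ⊆ P.dn (P.up B) :=
  fun _ ha _ hx => hx _ ha

lemma subset_up_dn (Y : Set P.Feat) : Y ⊆ P.up (P.dn Y) :=
  fun _ hx _ ha => ha _ hx

lemma up_anti {B C : Set P.Obj} (h : B ⊆ C) : P.up C ⊆ P.up B :=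
  fun _ hx b hb => hx b (h hb)

lemma dn_anti {Y Z : Set P.Feat} (h : Y ⊆ Z) : P.dn Z ⊆ P.dn Y :=
  fun _ ha y hy => ha y (h hy)

end Polarity

/-- A formal concept of a polarity: a Galois-stable pair (extension, intension). -/
structure Concept (P : Polarity) : Type where
  ext : Set P.Obj
  int : Set P.Feat
  up_ext : P.up ext = int
  dn_int : P.dn int = ext

namespace Concept

variable {P : Polarity}

/-- Lattice meet of concepts: extensions intersect. -/
def meet (c d : Concept P) : Concept P where
  ext := c.ext ∩ d.ext
  int := P.up (c.ext ∩ d.ext)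
  up_ext := rfl
  dn_int := by
    apply Set.Subset.antisymm
    · intro a ha
      constructor
      · rw [← c.dn_int]
        intro y hy
        apply ha
        rw [← c.up_ext] at hy
        exact P.up_anti Set.inter_subset_left hy
      · rw [← d.dn_int]
        intro y hy
        apply ha
        rw [← d.up_ext] at hy
        exact P.up_anti Set.inter_subset_right hy
    · exact P.subset_dn_up _

/-- Lattice join of concepts: intensions intersect. -/
def join (c d : Concept P) : Concept P where
  ext := P.dn (c.int ∩ d.int)
  int := c.int ∩ d.int
  up_ext := by
    apply Set.Subset.antisymm
    · intro x hx
      constructor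
      · rw [← c.up_ext]
        intro b hb
        apply hx
        rw [← c.dn_int] at hb
        exact P.dn_anti Set.inter_subset_left hb
      · rw [← d.up_ext]
        intro b hb
        apply hx
        rw [← d.dn_int] at hb
        exact P.dn_anti Set.inter_subset_right hb
    · exact P.subset_up_dn _
  dn_int := rfl

/-- The greatest concept. -/
def top (P : Polarity) : Concept P where
  ext := Set.univ
  int := P.up Set.univ
  up_ext := rfl
  dn_int := Set.eq_univ_of_univ_subset (P.subset_dn_up _)

/-- The least concept. -/
def bot (P : Polarity) : Concept P where
  ext := P.dn Set.univ
  int := Set.univ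
  up_ext := Set.eq_univ_of_univ_subset (P.subset_up_dn _)
  dn_int := rfl

end Concept

/-- A polarity-based model: a polarity with a valuation of variables into concepts. -/
structure Model : Type 1 where
  P : Polarity
  V : ℕ → Concept P

namespace Model

/-- Homomorphic extension of the valuation to all formulas. -/
def interp (M : Model) : Fm → Concept M.P
  | .var n => M.V n
  | .bot => Concept.bot M.P
  | .top => Concept.top M.P
  | .and φ ψ => Concept.meet (M.interp φ) (M.interp ψ)
  | .or φ ψ => Concept.join (M.interp φ) (M.interp ψ)

/-- M, a ⊩ φ : the object a is in the extension of φ. -/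
def objSat (M : Model) (a : M.P.Obj) (φ : Fm) : Prop := a ∈ (M.interp φ).ext

/-- M, x ≻ φ : the feature x is in the intension of φ. -/
def featSat (M : Model) (x : M.P.Feat) (φ : Fm) : Prop := x ∈ (M.interp φ).int

end Model

/-- Validity of the sequent φ ⊢ ψ: in every polarity-based model the
extension of φ is contained in the extension of ψ. -/
def SeqValid (φ ψ : Fm) : Prop :=
  ∀ M : Model, (M.interp φ).ext ⊆ (M.interp ψ).ext

/-- A conceptual cumulative consequence relation: reflexive and closed
under (LLE), (RW), (CM) and (Cut). -/
structure IsCumulative (R : Fm → Fm → Prop) : Prop where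
  refl : ∀ φ, R φ φ
  lle : ∀ φ ψ χ, SeqValid φ ψ → SeqValid ψ φ → R φ χ → R ψ χ
  rw : ∀ φ ψ χ, SeqValid φ ψ → R χ φ → R χ ψ
  cm : ∀ φ ψ χ, R φ ψ → R φ χ → R (Fm.and φ ψ) χ
  cut : ∀ φ ψ χ, R (Fm.and φ ψ) χ → R φ ψ → R φ χ

/-- Closure under the rule (Loop). -/
def LoopClosed (R : Fm → Fm → Prop) : Prop :=
  ∀ (n : ℕ) (φ : ℕ → Fm),
    (∀ i < n, R (φ i) (φ (i + 1))) → R (φ n) (φ 0) → R (φ 0) (φ n)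

/-- A pointed polarity-based model. -/
structure PointedModel : Type 1 where
  M : Model
  pt : M.P.Obj

/-- Satisfaction at a pointed model. -/
def PointedModel.sat (Ma : PointedModel) (φ : Fm) : Prop := Ma.M.objSat Ma.pt φ

/-- A pointed model is normal for φ iff it satisfies every plausible consequence of φ. -/
def NormalFor (R : Fm → Fm → Prop) (Ma : PointedModel) (φ : Fm) : Prop :=
  ∀ ψ, R φ ψ → Ma.sat ψ

/-- A pointed model is supernormal for φ. -/
def SupernormalFor (R : Fm → Fm → Prop) (Ma : PointedModel) (φ : Fm) : Prop :=
  ∀ ψ, R φ ψ ↔ Ma.sat ψ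

/-- A frame (S, l, ≺): states labelled by sets of pointed polarity-based
models with a preference relation. -/
structure Frame : Type 2 where
  S : Type
  l : S → Set PointedModel
  prec : S → S → Prop

/-- t is minimal in P (w.r.t. prec). -/
def MinimalIn {α : Type _} (prec : α → α → Prop) (P : Set α) (t : α) : Prop :=
  t ∈ P ∧ ∀ s ∈ P, ¬ prec s t

/-- t is a minimum of P (w.r.t. prec). -/
def IsMinimum {α : Type _} (prec : α → α → Prop) (P : Set α) (t : α) : Prop :=
  t ∈ P ∧ ∀ s ∈ P, s ≠ t → prec t s

/-- P is smooth (w.r.t. prec). -/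
def Smooth {α : Type _} (prec : α → α → Prop) (P : Set α) : Prop :=
  ∀ t ∈ P, MinimalIn prec P t ∨ ∃ s, MinimalIn prec P s ∧ prec s t

namespace Frame

/-- s ⊨ φ : every pointed model in l(s) satisfies φ. -/
def stateSat (F : Frame) (s : F.S) (φ : Fm) : Prop :=
  ∀ Ma ∈ F.l s, Ma.sat φ

/-- φ̂ : the set of states satisfying φ. -/
def hat (F : Frame) (φ : Fm) : Set F.S := {s | F.stateSat s φ}

/-- A conceptual cumulative model: φ̂ is smooth for every φ. -/
def IsCumulativeModel (F : Frame) : Prop :=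
  ∀ φ : Fm, Smooth F.prec (F.hat φ)

/-- The consequence relation |~_𝓜 defined by a frame: every state minimal
in φ̂ belongs to ψ̂. -/
def conseq (F : Frame) (φ ψ : Fm) : Prop :=
  ∀ s, MinimalIn F.prec (F.hat φ) s → s ∈ F.hat ψ

/-- Replace the preference relation of a frame. -/
def withPrec (F : Frame) (p : F.S → F.S → Prop) : Frame := ⟨F.S, F.l, p⟩

end Frame

/-- The equivalence class φ/∼ of φ under ∼ (φ ∼ ψ iff φ |~ ψ and ψ |~ φ). -/
def cls (R : Fm → Fm → Prop) (φ : Fm) : Set Fm := {ψ | R φ ψ ∧ R ψ φ}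

/-- φ/∼ ≤ ψ/∼ : there is χ ∈ φ/∼ with ψ |~ χ (ψ any representative of ψ/∼). -/
def clsLE (R : Fm → Fm → Prop) (C D : Set Fm) : Prop :=
  ∃ χ ∈ C, ∃ ψ ∈ D, R ψ χ

/-- The canonical model of a consequence relation: states are the
equivalence classes φ/∼, labelled by the normal pointed models for φ,
with φ/∼ ≺ ψ/∼ iff φ/∼ ≤ ψ/∼ and φ/∼ ≠ ψ/∼. -/
def canonicalFrame (R : Fm → Fm → Prop) : Frame where
  S := {C : Set Fm // ∃ φ, C = cls R φ}
  l := fun s => {Ma | ∃ φ, s.val = cls R φ ∧ NormalFor R Ma φ}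
  prec := fun s t => clsLE R s.val t.val ∧ s ≠ t

/-- The state φ/∼ of the canonical model. -/
def canonicalState (R : Fm → Fm → Prop) (φ : Fm) : (canonicalFrame R).S :=
  ⟨cls R φ, φ, rfl⟩


/-! ### Auxiliary material for the proof -/

section SeqValidLemmas

lemma seqValid_refl (φ : Fm) : SeqValid φ φ := fun _ => subset_rfl

lemma seqValid_trans {φ ψ χ : Fm} (h1 : SeqValid φ ψ) (h2 : SeqValid ψ χ) :
    SeqValid φ χ := fun M => (h1 M).trans (h2 M)

lemma seqValid_and_left (φ ψ : Fm) : SeqValid (φ.and ψ) φ :=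
  fun _ => Set.inter_subset_left

lemma seqValid_and_right (φ ψ : Fm) : SeqValid (φ.and ψ) ψ :=
  fun _ => Set.inter_subset_right

lemma seqValid_and_intro {θ φ ψ : Fm} (h1 : SeqValid θ φ) (h2 : SeqValid θ ψ) :
    SeqValid θ (φ.and ψ) := fun M => Set.subset_inter (h1 M) (h2 M)

lemma seqValid_and_comm (φ ψ : Fm) : SeqValid (φ.and ψ) (ψ.and φ) :=
  seqValid_and_intro (seqValid_and_right _ _) (seqValid_and_left _ _)

lemma seqValid_top (φ : Fm) : SeqValid φ Fm.top := fun _ _ _ => trivial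

lemma seqValid_bot (φ : Fm) : SeqValid Fm.bot φ := by
  intro M a ha
  rw [← (M.interp φ).dn_int]
  exact fun y _ => ha y trivial

lemma seqValid_or_left (φ ψ : Fm) : SeqValid φ (φ.or ψ) := by
  intro M a ha
  intro y hy
  rw [← (M.interp φ).dn_int] at ha
  exact ha y hy.1

lemma seqValid_or_right (φ ψ : Fm) : SeqValid ψ (φ.or ψ) := by
  intro M a ha
  intro y hy
  rw [← (M.interp ψ).dn_int] at ha
  exact ha y hy.2

lemma seqValid_or_elim {φ ψ θ : Fm} (h1 : SeqValid φ θ) (h2 : SeqValid ψ θ) :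
    SeqValid (φ.or ψ) θ := by
  intro M a ha
  rw [← (M.interp θ).dn_int]
  intro y hy
  have hy' : y ∈ M.P.up (M.interp θ).ext := by
    rw [(M.interp θ).up_ext]; exact hy
  refine ha y ⟨?_, ?_⟩
  · rw [← (M.interp φ).up_ext]; exact M.P.up_anti (h1 M) hy'
  · rw [← (M.interp ψ).up_ext]; exact M.P.up_anti (h2 M) hy'

end SeqValidLemmas

section DerivedRules

variable {R : Fm → Fm → Prop}

lemma IsCumulative.and_intro (hR : IsCumulative R) {φ ψ χ : Fm}
    (h1 : R φ ψ) (h2 : R φ χ) : R φ (ψ.and χ) := by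
  have s1 : R (φ.and ψ) χ := hR.cm _ _ _ h1 h2
  have s2 : R ((φ.and ψ).and χ) (ψ.and χ) :=
    hR.rw _ _ _
      (seqValid_and_intro
        (seqValid_trans (seqValid_and_left _ _) (seqValid_and_right _ _))
        (seqValid_and_right _ _))
      (hR.refl _)
  have s3 : R (φ.and ψ) (ψ.and χ) := hR.cut _ _ _ s2 s1
  exact hR.cut _ _ _ s3 h1

/-- Equivalence rule: if φ and φ' are mutually plausible consequences then
they have the same plausible consequences. -/
lemma IsCumulative.equiv_left (hR : IsCumulative R) {φ φ' ψ : Fm}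
    (h1 : R φ φ') (h2 : R φ' φ) (h3 : R φ ψ) : R φ' ψ := by
  have s1 : R (φ.and φ') ψ := hR.cm _ _ _ h1 h3
  have s2 : R (φ'.and φ) ψ :=
    hR.lle _ _ _ (seqValid_and_comm φ φ') (seqValid_and_comm φ' φ) s1
  exact hR.cut _ _ _ s2 h2

lemma cls_eq {σ τ : Fm} (hR : IsCumulative R) (h1 : R σ τ) (h2 : R τ σ) :
    cls R σ = cls R τ := by
  ext θ
  constructor
  · rintro ⟨a, b⟩
    exact ⟨hR.equiv_left h1 h2 a, hR.equiv_left a b h1⟩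
  · rintro ⟨a, b⟩
    exact ⟨hR.equiv_left h2 h1 a, hR.equiv_left a b h2⟩

end DerivedRules

section CanonicalPolarity

/-- A (semantic) filter of formulas. -/
structure IsFilter (F : Set Fm) : Prop where
  top : Fm.top ∈ F
  and : ∀ {φ ψ}, φ ∈ F → ψ ∈ F → Fm.and φ ψ ∈ F
  up : ∀ {φ ψ}, φ ∈ F → SeqValid φ ψ → ψ ∈ F

/-- A (semantic) ideal of formulas. -/
structure IsIdeal (J : Set Fm) : Prop where
  bot : Fm.bot ∈ J
  or : ∀ {φ ψ}, φ ∈ J → ψ ∈ J → Fm.or φ ψ ∈ J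
  dn : ∀ {φ ψ}, φ ∈ J → SeqValid ψ φ → ψ ∈ J

def principalFilter (φ : Fm) : Set Fm := {ψ | SeqValid φ ψ}

lemma isFilter_principal (φ : Fm) : IsFilter (principalFilter φ) :=
  ⟨seqValid_top φ, fun h1 h2 => seqValid_and_intro h1 h2,
    fun h1 h2 => seqValid_trans h1 h2⟩

def principalIdeal (φ : Fm) : Set Fm := {ψ | SeqValid ψ φ}

lemma isIdeal_principal (φ : Fm) : IsIdeal (principalIdeal φ) :=
  ⟨seqValid_bot φ, fun h1 h2 => seqValid_or_elim h1 h2,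
    fun h1 h2 => seqValid_trans h2 h1⟩

/-- The canonical polarity: filters vs ideals, related by non-disjointness. -/
def canonP : Polarity where
  Obj := {F : Set Fm // IsFilter F}
  Feat := {J : Set Fm // IsIdeal J}
  I := fun F J => ∃ θ, θ ∈ F.val ∧ θ ∈ J.val

/-- The canonical concept of a formula. -/
def canonConcept (φ : Fm) : Concept canonP where
  ext := {F | φ ∈ F.val}
  int := {J | φ ∈ J.val}
  up_ext := by
    apply Set.Subset.antisymm
    · intro J hJ
      obtain ⟨θ, hθF, hθJ⟩ :=
        hJ ⟨principalFilter φ, isFilter_principal φ⟩ (seqValid_refl φ)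
      exact J.2.dn hθJ hθF
    · intro J hJ F hF
      exact ⟨φ, hF, hJ⟩
  dn_int := by
    apply Set.Subset.antisymm
    · intro F hF
      obtain ⟨θ, hθF, hθJ⟩ :=
        hF ⟨principalIdeal φ, isIdeal_principal φ⟩ (seqValid_refl φ)
      exact F.2.up hθF hθJ
    · intro F hF J hJ
      exact ⟨φ, hF, hJ⟩

/-- The canonical polarity-based model. -/
def canonM : Model where
  P := canonP
  V := fun n => canonConcept (.var n)

lemma Concept.ext_injective {P : Polarity} {c d : Concept P}
    (h : c.ext = d.ext) : c = d := by
  obtain ⟨e1, i1, u1, d1⟩ := c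
  obtain ⟨e2, i2, u2, d2⟩ := d
  cases h
  obtain rfl : i1 = i2 := u1.symm.trans u2
  rfl

/-- Truth lemma for the canonical model. -/
lemma canon_interp (φ : Fm) : canonM.interp φ = canonConcept φ := by
  induction φ with
  | var n => rfl
  | bot =>
    apply Concept.ext_injective
    apply Set.Subset.antisymm
    · intro F hF
      obtain ⟨θ, hθF, hθJ⟩ :=
        hF ⟨principalIdeal Fm.bot, isIdeal_principal _⟩ trivial
      exact F.2.up hθF hθJ
    · intro F hF J _
      exact ⟨Fm.bot, hF, J.2.bot⟩
  | top =>
    apply Concept.ext_injective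
    apply Set.Subset.antisymm
    · intro F _
      exact F.2.top
    · intro F _
      exact trivial
  | and φ ψ ihφ ihψ =>
    show Concept.meet (canonM.interp φ) (canonM.interp ψ) = _
    rw [ihφ, ihψ]
    apply Concept.ext_injective
    apply Set.Subset.antisymm
    · rintro F ⟨h1, h2⟩
      exact F.2.and h1 h2
    · intro F hF
      exact ⟨F.2.up hF (seqValid_and_left _ _), F.2.up hF (seqValid_and_right _ _)⟩
  | or φ ψ ihφ ihψ =>
    show Concept.join (canonM.interp φ) (canonM.interp ψ) = _
    rw [ihφ, ihψ]
    apply Concept.ext_injective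
    apply Set.Subset.antisymm
    · intro F hF
      obtain ⟨θ, hθF, hθJ⟩ :=
        hF ⟨principalIdeal (Fm.or φ ψ), isIdeal_principal _⟩
          ⟨seqValid_or_left φ ψ, seqValid_or_right φ ψ⟩
      exact F.2.up hθF hθJ
    · rintro F hF J ⟨hJφ, hJψ⟩
      exact ⟨Fm.or φ ψ, hF, J.2.or hJφ hJψ⟩

/-- Supernormal pointed models exist for every formula. -/
lemma exists_supernormal {R : Fm → Fm → Prop} (hR : IsCumulative R) (φ : Fm) :
    ∃ Ma : PointedModel, SupernormalFor R Ma φ := by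
  have hfil : IsFilter {ψ | R φ ψ} :=
    ⟨hR.rw _ _ _ (seqValid_top φ) (hR.refl φ),
      fun h1 h2 => hR.and_intro h1 h2,
      fun h1 h2 => hR.rw _ _ _ h2 h1⟩
  refine ⟨⟨canonM, ⟨{ψ | R φ ψ}, hfil⟩⟩, fun ψ => ?_⟩
  show R φ ψ ↔ (⟨{ψ | R φ ψ}, hfil⟩ : canonP.Obj) ∈ (canonM.interp ψ).ext
  rw [canon_interp]
  exact Iff.rfl

end CanonicalPolarity

section Canonical

variable {R : Fm → Fm → Prop}

lemma stateSat_canon (hR : IsCumulative R) {s : (canonicalFrame R).S} {σ : Fm}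
    (hs : s.val = cls R σ) (ψ : Fm) :
    (canonicalFrame R).stateSat s ψ ↔ R σ ψ := by
  constructor
  · intro h
    obtain ⟨Ma, hMa⟩ := exists_supernormal hR σ
    exact (hMa ψ).2 (h Ma ⟨σ, hs, fun χ hχ => (hMa χ).1 hχ⟩)
  · rintro h Ma ⟨φ', hφ', hnorm⟩
    have hcl : cls R σ = cls R φ' := hs.symm.trans hφ'
    have hmem : σ ∈ cls R φ' := hcl ▸ ⟨hR.refl σ, hR.refl σ⟩
    exact hnorm ψ (hR.equiv_left hmem.2 hmem.1 h)

lemma min_canon (hR : IsCumulative R) (ψ : Fm) :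
    MinimalIn (canonicalFrame R).prec ((canonicalFrame R).hat ψ)
      (canonicalState R ψ) := by
  constructor
  · exact (stateSat_canon hR rfl ψ).2 (hR.refl ψ)
  · rintro t ht ⟨⟨χ, hχ, ψ', hψ', hRψ'χ⟩, hne⟩
    obtain ⟨τ, hτ⟩ := t.2
    have hτψ : R τ ψ := (stateSat_canon hR hτ ψ).1 ht
    rw [hτ] at hχ
    have hψ'2 : ψ' ∈ cls R ψ := hψ'
    have hψχ : R ψ χ := hR.equiv_left hψ'2.2 hψ'2.1 hRψ'χ
    have hχψ : R χ ψ := hR.equiv_left hχ.1 hχ.2 hτψ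
    have hψτ : R ψ τ := hR.equiv_left hχψ hψχ hχ.2
    exact hne (Subtype.ext (hτ.trans (cls_eq hR hτψ hψτ)))

lemma canon_cumulative (hR : IsCumulative R) :
    (canonicalFrame R).IsCumulativeModel := by
  intro ψ t ht
  by_cases hc : t = canonicalState R ψ
  · left; rw [hc]; exact min_canon hR ψ
  · right
    obtain ⟨τ, hτ⟩ := t.2
    refine ⟨canonicalState R ψ, min_canon hR ψ,
      ⟨⟨ψ, ⟨hR.refl ψ, hR.refl ψ⟩, τ, ?_, ?_⟩, Ne.symm hc⟩⟩
    · rw [hτ]; exact ⟨hR.refl τ, hR.refl τ⟩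
    · exact (stateSat_canon hR hτ ψ).1 ht

lemma conseq_canon (hR : IsCumulative R) (φ ψ : Fm) :
    (canonicalFrame R).conseq φ ψ ↔ R φ ψ := by
  constructor
  · intro h
    exact (stateSat_canon hR rfl ψ).1 (h _ (min_canon hR φ))
  · intro h s hmin
    by_cases hc : s = canonicalState R φ
    · rw [hc]
      exact (stateSat_canon hR rfl ψ).2 h
    · exfalso
      apply hmin.2 (canonicalState R φ) (min_canon hR φ).1
      obtain ⟨τ, hτ⟩ := s.2
      have hτφ : R τ φ := (stateSat_canon hR hτ φ).1 hmin.1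
      exact ⟨⟨φ, ⟨hR.refl φ, hR.refl φ⟩, τ,
        by rw [hτ]; exact ⟨hR.refl τ, hR.refl τ⟩, hτφ⟩, Ne.symm hc⟩

end Canonical

section Soundness

lemma hat_mono (F : Frame) {φ ψ : Fm} (h : SeqValid φ ψ) :
    F.hat φ ⊆ F.hat ψ :=
  fun _ hs Ma hMa => h Ma.M (hs Ma hMa)

lemma hat_and (F : Frame) (φ ψ : Fm) :
    F.hat (Fm.and φ ψ) = F.hat φ ∩ F.hat ψ := by
  ext s
  constructor
  · intro h
    exact ⟨fun Ma hMa => (h Ma hMa).1, fun Ma hMa => (h Ma hMa).2⟩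
  · rintro ⟨h1, h2⟩ Ma hMa
    exact ⟨h1 Ma hMa, h2 Ma hMa⟩

lemma conseq_isCumulative (F : Frame) (hF : F.IsCumulativeModel) :
    IsCumulative F.conseq := by
  refine ⟨?_, ?_, ?_, ?_, ?_⟩
  · intro φ s hs
    exact hs.1
  · intro φ ψ χ h1 h2 hc s hs
    refine hc s ?_
    rw [Set.Subset.antisymm (hat_mono F h1) (hat_mono F h2)]
    exact hs
  · intro φ ψ χ h hc s hs
    exact hat_mono F h (hc s hs)
  · intro φ ψ χ h1 h2 s hs
    rw [hat_and] at hs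
    have hsφ : s ∈ F.hat φ := hs.1.1
    have hmin : MinimalIn F.prec (F.hat φ) s := by
      rcases hF φ s hsφ with h | ⟨u, hu, hus⟩
      · exact h
      · exact absurd hus (hs.2 u ⟨hu.1, h1 u hu⟩)
    exact h2 s hmin
  · intro φ ψ χ h1 h2 s hs
    have hsψ : s ∈ F.hat ψ := h2 s hs
    have hmin : MinimalIn F.prec (F.hat (Fm.and φ ψ)) s := by
      rw [hat_and]
      exact ⟨⟨hs.1, hsψ⟩, fun u hu => hs.2 u hu.1⟩
    exact h1 s hmin

end Soundness


/-- K cumulatively entails α |~ β iff (α,β) belongs to the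
smallest conceptual cumulative consequence relation containing K. -/
theorem cumulative_entailment_iff_provable (K : Set (Fm × Fm)) (α β : Fm) :
    (∀ F : Frame, F.IsCumulativeModel →
      (∀ p ∈ K, F.conseq p.1 p.2) → F.conseq α β) ↔
    (∀ R : Fm → Fm → Prop, IsCumulative R →
      (∀ p ∈ K, R p.1 p.2) → R α β) := by
  constructor
  · intro H1 R hR hK
    have h := H1 (canonicalFrame R) (canon_cumulative hR)
      (fun p hp => (conseq_canon hR p.1 p.2).2 (hK p hp))
    exact (conseq_canon hR α β).1 h
  · intro H2 F hF hK
    exact H2 F.conseq (conseq_isCumulative F hF) hK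

end DR
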